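/- arXiv:1401.1559 — 2 statements merged into one kernel-verified Lean document; each statement's English description precedes it below -/
import Mathlib

section
/- Let v be monotone submodular with v(∅)=0 and let the decision map X be maximal. Then in every pure Nash equilibrium p of the pricing game, the utility of each seller i equals v(N) - v(N\{i}); in particular, if v(N) - v(N\{i}) > 0 then p_i = v(N) - v(N\{i}) and i ∈ X(p). -/
/-!
A seller can raise its price up to its marginal value `v N - v (N \ {i})` and still be bought,
since by submodularity it adds at least that much to any bundle; so its equilibrium utility is
at least that marginal value. Conversely, if seller `i` is bought, some optimal bundle `T` avoids
`i`, for otherwise `i` could raise its price a little and still be bought. Every seller outside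
`T` adds to `T` at most its own utility, and summing these marginals along `T ⊆ N \ {i}` gives
`v (N \ {i}) ≤ v N - p i`.
-/

open Finset Function

section Submodular

variable {α : Type*} [DecidableEq α] {v : Finset α → ℝ}

theorem marginal_antitone_of_submodular
    (hsub : ∀ S T : Finset α, v (S ∪ T) + v (S ∩ T) ≤ v S + v T)
    {S T : Finset α} {k : α} (hTS : T ⊆ S) (hkS : k ∉ S) :
    v (insert k S) - v S ≤ v (insert k T) - v T := by
  have h := hsub S (insert k T)
  rw [union_insert, union_eq_left.2 hTS, inter_insert_of_notMem hkS,
    inter_eq_right.2 hTS] at h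
  linarith

theorem sub_le_sum_marginal_of_submodular
    (hsub : ∀ S T : Finset α, v (S ∪ T) + v (S ∩ T) ≤ v S + v T)
    {S T : Finset α} (hTS : T ⊆ S) :
    v S - v T ≤ ∑ k ∈ S \ T, (v (insert k T) - v T) := by
  suffices h : ∀ D : Finset α, Disjoint D T →
      v (T ∪ D) - v T ≤ ∑ k ∈ D, (v (insert k T) - v T) by
    simpa only [union_sdiff_of_subset hTS] using h (S \ T) sdiff_disjoint
  intro D
  induction D using Finset.induction_on with
  | empty => simp
  | @insert a D haD ih =>
    intro hdisj
    rw [disjoint_insert_left] at hdisj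
    have hmarg := marginal_antitone_of_submodular hsub (subset_union_left (s₂ := D))
      (show a ∉ T ∪ D by simp [hdisj.1, haD])
    rw [union_insert, sum_insert haD]
    linarith [ih hdisj.2]

theorem marginal_univ_le_of_submodular [Fintype α]
    (hsub : ∀ S T : Finset α, v (S ∪ T) + v (S ∩ T) ≤ v S + v T)
    {S : Finset α} {k : α} (hkS : k ∉ S) :
    v univ - v (univ.erase k) ≤ v (insert k S) - v S := by
  simpa only [insert_erase (mem_univ k)] using
    marginal_antitone_of_submodular hsub (subset_erase.2 ⟨subset_univ S, hkS⟩) (notMem_erase k univ)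

end Submodular

section PricingGame

variable {ι : Type*} [DecidableEq ι]

def surplus (v : Finset ι → ℝ) (p : ι → ℝ) (S : Finset ι) : ℝ := v S - ∑ j ∈ S, p j

def utility (X : (ι → ℝ) → Finset ι) (p : ι → ℝ) (i : ι) : ℝ := if i ∈ X p then p i else 0

def IsDemand (v : Finset ι → ℝ) (X : (ι → ℝ) → Finset ι) : Prop :=
  ∀ q : ι → ℝ, (∀ i, 0 ≤ q i) → ∀ T, surplus v q T ≤ surplus v q (X q)

def IsNashEquilibrium (X : (ι → ℝ) → Finset ι) (p : ι → ℝ) : Prop :=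
  ∀ i q, 0 ≤ q → utility X (update p i q) i ≤ utility X p i

variable {v : Finset ι → ℝ} {X : (ι → ℝ) → Finset ι} {p : ι → ℝ}

theorem update_nonneg (hp : ∀ i, 0 ≤ p i) {k : ι} {q : ℝ} (hq : 0 ≤ q) (j : ι) :
    0 ≤ update p k q j := by
  rw [update_apply]
  split_ifs
  exacts [hq, hp j]

theorem surplus_update_of_notMem {S : Finset ι} {k : ι} (hk : k ∉ S) (q : ℝ) :
    surplus v (update p k q) S = surplus v p S := by
  rw [surplus, surplus, sum_update_of_notMem hk]

theorem surplus_update_insert {S : Finset ι} {k : ι} (hk : k ∉ S) (q : ℝ) :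
    surplus v (update p k q) (insert k S) = v (insert k S) - ∑ j ∈ S, p j - q := by
  rw [surplus, sum_insert hk, update_self, sum_update_of_notMem hk]
  ring

theorem surplus_update_of_mem {S : Finset ι} {k : ι} (hk : k ∈ S) (q : ℝ) :
    surplus v (update p k q) S = surplus v p S + p k - q := by
  rw [← insert_erase hk, surplus_update_insert (notMem_erase k S), surplus,
    sum_insert (notMem_erase k S)]
  ring

theorem utility_nonneg (hp : ∀ i, 0 ≤ p i) (i : ι) : 0 ≤ utility X p i := by
  unfold utility
  split_ifs
  exacts [hp i, le_rfl]

theorem sum_utility_univ [Fintype ι] : ∑ k, utility X p k = ∑ k ∈ X p, p k := by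
  simp only [utility, sum_ite_mem, univ_inter]

namespace IsNashEquilibrium

theorem le_utility (hNE : IsNashEquilibrium X p) {k : ι} {q : ℝ} (hq : 0 ≤ q)
    (hk : k ∈ X (update p k q)) : q ≤ utility X p k := by
  simpa only [utility, if_pos hk, update_self] using hNE k q hq

/-- Otherwise `k` could charge a price strictly between its utility and the excess of `S + k`
over the buyer's surplus, and still be bought. -/
theorem surplus_insert_le (hX : IsDemand v X) (hNE : IsNashEquilibrium X p)
    (hp : ∀ i, 0 ≤ p i) {S : Finset ι} {k : ι} (hkS : k ∉ S) :
    v (insert k S) - ∑ j ∈ S, p j ≤ surplus v p (X p) + utility X p k := by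
  by_contra! h
  set q := (utility X p k + (v (insert k S) - ∑ j ∈ S, p j - surplus v p (X p))) / 2 with hq_def
  have hq : 0 ≤ q := by linarith [utility_nonneg (X := X) hp k]
  have hk : k ∈ X (update p k q) := by
    by_contra hk
    have hopt := hX (update p k q) (update_nonneg hp hq) (insert k S)
    rw [surplus_update_insert hkS, surplus_update_of_notMem hk] at hopt
    linarith [hX p hp (X (update p k q))]
  linarith [hNE.le_utility hq hk]

theorem le_utility_of_le_marginal (hX : IsDemand v X) (hNE : IsNashEquilibrium X p)
    (hp : ∀ i, 0 ≤ p i) {k : ι} {c : ℝ}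
    (hc : ∀ S : Finset ι, k ∉ S → c ≤ v (insert k S) - v S) :
    c ≤ utility X p k := by
  by_contra! h
  set q := (utility X p k + c) / 2 with hq_def
  have hq : 0 ≤ q := by linarith [utility_nonneg (X := X) hp k]
  have hk : k ∈ X (update p k q) := by
    by_contra hk
    have hopt := hX (update p k q) (update_nonneg hp hq) (insert k (X (update p k q)))
    rw [surplus_update_insert hk, surplus, sum_update_of_notMem hk] at hopt
    linarith [hc _ hk]
  linarith [hNE.le_utility hq hk]

/-- If every bundle without `i` were strictly worse, `i` could raise its price by half the gap
and still be bought. -/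
theorem exists_optimal_notMem [Fintype ι] (hX : IsDemand v X) (hNE : IsNashEquilibrium X p)
    (hp : ∀ i, 0 ≤ p i) {i : ι} (hi : i ∈ X p) :
    ∃ T, i ∉ T ∧ surplus v p (X p) ≤ surplus v p T := by
  obtain ⟨T, hT, hTmax⟩ := exists_max_image (univ.erase i).powerset (surplus v p)
    ⟨∅, empty_mem_powerset _⟩
  have hiT : i ∉ T := (subset_erase.1 (mem_powerset.1 hT)).2
  refine ⟨T, hiT, ?_⟩
  by_contra! hgap
  set q := p i + (surplus v p (X p) - surplus v p T) / 2 with hq_def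
  have hq : 0 ≤ q := by linarith [hp i]
  have hi' : i ∉ X (update p i q) := fun h => by
    have := hNE.le_utility hq h
    rw [utility, if_pos hi] at this
    linarith
  have hopt := hX (update p i q) (update_nonneg hp hq) (X p)
  rw [surplus_update_of_mem hi, surplus_update_of_notMem hi'] at hopt
  have hle := hTmax _ (mem_powerset.2 (subset_erase.2 ⟨subset_univ _, hi'⟩))
  linarith

theorem utility_eq_of_optimal (hX : IsDemand v X) (hNE : IsNashEquilibrium X p)
    (hp : ∀ i, 0 ≤ p i) {T : Finset ι} (hT : surplus v p (X p) ≤ surplus v p T)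
    {k : ι} (hk : k ∈ T) : utility X p k = p k := by
  by_cases hkX : k ∈ X p
  · exact if_pos hkX
  · have h := hNE.surplus_insert_le hX hp (notMem_erase k T)
    rw [insert_erase hk, utility, if_neg hkX, sum_erase_eq_sub hk] at h
    rw [utility, if_neg hkX]
    unfold surplus at h hT
    linarith [hp k]

theorem marginal_le_utility_of_optimal (hX : IsDemand v X) (hNE : IsNashEquilibrium X p)
    (hp : ∀ i, 0 ≤ p i) {T : Finset ι} (hT : surplus v p (X p) ≤ surplus v p T)
    {k : ι} (hk : k ∉ T) : v (insert k T) - v T ≤ utility X p k := by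
  have h := hNE.surplus_insert_le hX hp hk
  unfold surplus at h hT
  linarith

theorem price_le_marginal [Fintype ι] (hmono : ∀ S T : Finset ι, S ⊆ T → v S ≤ v T)
    (hsub : ∀ S T : Finset ι, v (S ∪ T) + v (S ∩ T) ≤ v S + v T)
    (hX : IsDemand v X) (hNE : IsNashEquilibrium X p) (hp : ∀ i, 0 ≤ p i)
    {i : ι} (hi : i ∈ X p) : p i ≤ v univ - v (univ.erase i) := by
  obtain ⟨T, hiT, hT⟩ := hNE.exists_optimal_notMem hX hp hi
  have hTsub : T ⊆ univ.erase i := subset_erase.2 ⟨subset_univ T, hiT⟩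
  have hsum : v (univ.erase i) - v T ≤ ∑ k ∈ univ.erase i \ T, utility X p k :=
    (sub_le_sum_marginal_of_submodular hsub hTsub).trans <| sum_le_sum fun k hk =>
      hNE.marginal_le_utility_of_optimal hX hp hT (mem_sdiff.1 hk).2
  have hsplit : ∑ k ∈ univ.erase i \ T, utility X p k = ∑ k ∈ X p, p k - p i - ∑ k ∈ T, p k := by
    rw [sum_sdiff_eq_sub hTsub, sum_erase_eq_sub (mem_univ i), sum_utility_univ,
      sum_congr rfl fun k hk => hNE.utility_eq_of_optimal hX hp hT hk, utility, if_pos hi]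
  have hTopt := hX p hp T
  unfold surplus at hTopt
  linarith [hmono _ _ (subset_univ (X p))]

end IsNashEquilibrium

end PricingGame

theorem stmt8_general {n : ℕ} (v : Finset (Fin n) → ℝ)
    (hmono : ∀ S T : Finset (Fin n), S ⊆ T → v S ≤ v T)
    (hsub : ∀ S T : Finset (Fin n), v (S ∪ T) + v (S ∩ T) ≤ v S + v T)
    (X : (Fin n → ℝ) → Finset (Fin n))
    (hXd : ∀ q : Fin n → ℝ, (∀ i, 0 ≤ q i) → ∀ T : Finset (Fin n),
      v T - ∑ i ∈ T, q i ≤ v (X q) - ∑ i ∈ X q, q i)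
    (p : Fin n → ℝ) (hp : ∀ i, 0 ≤ p i)
    (hnash : ∀ i : Fin n, ∀ q : ℝ, 0 ≤ q →
      (if i ∈ X (Function.update p i q) then q else 0) ≤
      (if i ∈ X p then p i else 0)) :
    ∀ i : Fin n,
      (if i ∈ X p then p i else 0) = v Finset.univ - v (Finset.univ.erase i) ∧
      (0 < v Finset.univ - v (Finset.univ.erase i) →
        p i = v Finset.univ - v (Finset.univ.erase i) ∧ i ∈ X p) := by
  have hX : IsDemand v X := hXd
  have hNE : IsNashEquilibrium X p := by
    intro i q hq
    simpa only [utility, update_self] using hnash i q hq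
  intro i
  have hlow : v univ - v (univ.erase i) ≤ utility X p i :=
    hNE.le_utility_of_le_marginal hX hp fun _ => marginal_univ_le_of_submodular hsub
  have hmarg_nonneg : 0 ≤ v univ - v (univ.erase i) :=
    sub_nonneg.2 (hmono _ _ (erase_subset i univ))
  by_cases hi : i ∈ X p
  · have heq := le_antisymm (hNE.price_le_marginal hmono hsub hX hp hi)
      (by simpa only [utility, if_pos hi] using hlow)
    simpa only [if_pos hi] using ⟨heq, fun _ => ⟨heq, hi⟩⟩
  · rw [utility, if_neg hi] at hlow
    simp only [if_neg hi]
    exact ⟨by linarith, fun h => absurd h (by linarith)⟩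

/-- For monotone submodular `v` with `v ∅ = 0` and a maximal
decision map `X`, in every pure Nash equilibrium the utility of each seller `i`
equals `v(N) - v(N \ {i})`; in particular if this marginal is positive then
`p i` equals it and `i` is selected. -/
theorem stmt8 {n : ℕ} (v : Finset (Fin n) → ℝ)
    (hmono : ∀ S T : Finset (Fin n), S ⊆ T → v S ≤ v T)
    (hsub : ∀ S T : Finset (Fin n), v (S ∪ T) + v (S ∩ T) ≤ v S + v T)
    (hv0 : v ∅ = 0)
    (X : (Fin n → ℝ) → Finset (Fin n))
    (hXd : ∀ q : Fin n → ℝ, (∀ i, 0 ≤ q i) → ∀ T : Finset (Fin n),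
      v T - ∑ i ∈ T, q i ≤ v (X q) - ∑ i ∈ X q, q i)
    (hXmax : ∀ q : Fin n → ℝ, (∀ i, 0 ≤ q i) → ∀ T : Finset (Fin n),
      (∀ U : Finset (Fin n), v U - ∑ i ∈ U, q i ≤ v T - ∑ i ∈ T, q i) →
      ¬ X q ⊂ T)
    (p : Fin n → ℝ) (hp : ∀ i, 0 ≤ p i)
    (hnash : ∀ i : Fin n, ∀ q : ℝ, 0 ≤ q →
      (if i ∈ X (Function.update p i q) then q else 0) ≤
      (if i ∈ X p then p i else 0)) :
    ∀ i : Fin n,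
      (if i ∈ X p then p i else 0) = v Finset.univ - v (Finset.univ.erase i) ∧
      (0 < v Finset.univ - v (Finset.univ.erase i) →
        p i = v Finset.univ - v (Finset.univ.erase i) ∧ i ∈ X p) :=
  stmt8_general v hmono hsub X hXd p hp hnash
end

section
/- Let v be monotone submodular with v(∅)=0 and X a maximal decision map. In the monopolistic seller game, where a single seller sets all prices p ∈ ℝ^N_{≥0} and earns u(p) = Σ_{j∈X(p)} p_j, we have sup_p u(p) = max_{S⊆N} Σ_{i∈S} [v(S) - v(S\{i})]. -/
/-!
Call a bundle `S` demanded at prices `p` if it maximizes the buyer's surplus `v S - ∑_{i ∈ S} p i`.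
Dropping one item from a demanded bundle cannot raise the surplus, so every price inside a
demanded bundle is at most the marginal value of its item; summing gives the upper bound.
Conversely, price every item of `S` at its marginal value `v S - v (S \ {i})` and every other item
above the total variation `v N - v ∅` of `v`. By submodularity the marginal values of the items of
`S \ T` add up to at most `v S - v (S ∩ T)`, so `S` is demanded; no demanded bundle contains an item
outside `S`, so the maximal decision map must pick exactly `S`, and the revenue is the sum of the
marginal values.
-/

open Finset

variable {α : Type*}

def IsDemanded (v : Finset α → ℝ) (p : α → ℝ) (S : Finset α) : Prop :=
  ∀ T, v T - ∑ i ∈ T, p i ≤ v S - ∑ i ∈ S, p i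

variable [DecidableEq α]

namespace IsDemanded

variable {v : Finset α → ℝ} {p : α → ℝ} {S : Finset α}

lemma le_marginal (hS : IsDemanded v p S) {i : α} (hi : i ∈ S) :
    p i ≤ v S - v (S.erase i) := by
  have h := hS (S.erase i)
  rw [← add_sum_erase S p hi] at h
  linarith

lemma sum_le_sum_marginal (hS : IsDemanded v p S) :
    ∑ i ∈ S, p i ≤ ∑ i ∈ S, (v S - v (S.erase i)) :=
  sum_le_sum fun _ hi => hS.le_marginal hi

end IsDemanded

lemma add_sum_marginal_le_of_submodular {v : Finset α → ℝ}
    (hsub : ∀ S T : Finset α, v (S ∪ T) + v (S ∩ T) ≤ v S + v T) {S D : Finset α}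
    (hD : D ⊆ S) : v (S \ D) + ∑ i ∈ D, (v S - v (S.erase i)) ≤ v S := by
  induction D using Finset.induction_on with
  | empty => simp
  | @insert a D ha ih =>
    have hunion : S.erase a ∪ (S \ D) = S := by
      rw [erase_union_of_mem (mem_sdiff.2 ⟨hD (mem_insert_self a D), ha⟩),
        union_eq_left.2 sdiff_subset]
    have hinter : S.erase a ∩ (S \ D) = S \ insert a D := by
      ext x
      simp only [mem_inter, mem_erase, mem_sdiff, mem_insert]
      tauto
    have h := hsub (S.erase a) (S \ D)
    rw [hunion, hinter] at h
    have := ih ((subset_insert a D).trans hD)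
    rw [sum_insert ha]
    linarith

def marginalPrices (v : Finset α → ℝ) (S : Finset α) (M : ℝ) (i : α) : ℝ :=
  if i ∈ S then v S - v (S.erase i) else M

section marginalPrices

variable {v : Finset α → ℝ} {S : Finset α} {M : ℝ}

lemma marginalPrices_nonneg (hmono : Monotone v) (hM : 0 ≤ M) (i : α) :
    0 ≤ marginalPrices v S M i := by
  unfold marginalPrices
  split_ifs
  · linarith [hmono (S.erase_subset i)]
  · exact hM

lemma sum_marginalPrices_of_subset {T : Finset α} (hT : T ⊆ S) :
    ∑ i ∈ T, marginalPrices v S M i = ∑ i ∈ T, (v S - v (S.erase i)) :=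
  sum_congr rfl fun _ hi => if_pos (hT hi)

variable [Fintype α]

lemma isDemanded_marginalPrices (hmono : Monotone v)
    (hsub : ∀ S T : Finset α, v (S ∪ T) + v (S ∩ T) ≤ v S + v T)
    (hM : v univ - v ∅ ≤ M) : IsDemanded v (marginalPrices v S M) S := by
  intro U
  set p := marginalPrices v S M
  have hM0 : 0 ≤ M := by linarith [hmono (empty_subset (univ : Finset α))]
  have houtside : v U - v (S ∩ U) ≤ ∑ i ∈ U \ S, p i := by
    rcases (U \ S).eq_empty_or_nonempty with hUS | ⟨a, ha⟩
    · rw [inter_eq_right.2 (sdiff_eq_empty_iff_subset.1 hUS), hUS, sum_empty, sub_self]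
    · have hpa : p a = M := if_neg (mem_sdiff.1 ha).2
      calc v U - v (S ∩ U) ≤ v univ - v ∅ := by
            linarith [hmono (subset_univ U), hmono (empty_subset (S ∩ U))]
        _ ≤ p a := hpa ▸ hM
        _ ≤ ∑ i ∈ U \ S, p i :=
            single_le_sum (fun i _ => marginalPrices_nonneg hmono hM0 i) ha
  have hinside := add_sum_marginal_le_of_submodular hsub (sdiff_subset : S \ U ⊆ S)
  rw [sdiff_sdiff_self_left, ← sum_marginalPrices_of_subset (M := M) sdiff_subset] at hinside
  rw [← sum_inter_add_sum_sdiff U S p, ← sum_inter_add_sum_sdiff S U p, inter_comm U S]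
  linarith

lemma subset_of_isDemanded_marginalPrices (hmono : Monotone v) (hM : v univ - v ∅ < M)
    {T : Finset α} (hT : IsDemanded v (marginalPrices v S M) T) : T ⊆ S := by
  intro i hiT
  by_contra hiS
  have h := hT.le_marginal hiT
  rw [marginalPrices, if_neg hiS] at h
  linarith [hmono (subset_univ T), hmono (empty_subset (T.erase i))]

end marginalPrices

theorem stmt16_general {n : ℕ} (v : Finset (Fin n) → ℝ)
    (hmono : ∀ S T : Finset (Fin n), S ⊆ T → v S ≤ v T)
    (hsub : ∀ S T : Finset (Fin n), v (S ∪ T) + v (S ∩ T) ≤ v S + v T)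
    (X : (Fin n → ℝ) → Finset (Fin n))
    (hXd : ∀ q : Fin n → ℝ, (∀ i, 0 ≤ q i) → ∀ T : Finset (Fin n),
      v T - ∑ i ∈ T, q i ≤ v (X q) - ∑ i ∈ X q, q i)
    (hXmax : ∀ q : Fin n → ℝ, (∀ i, 0 ≤ q i) → ∀ T : Finset (Fin n),
      (∀ U : Finset (Fin n), v U - ∑ i ∈ U, q i ≤ v T - ∑ i ∈ T, q i) →
      ¬ X q ⊂ T) :
    (∀ p : Fin n → ℝ, (∀ i, 0 ≤ p i) → ∃ S : Finset (Fin n),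
      ∑ j ∈ X p, p j ≤ ∑ i ∈ S, (v S - v (S.erase i))) ∧
    (∀ S : Finset (Fin n), ∃ p : Fin n → ℝ, (∀ i, 0 ≤ p i) ∧
      ∑ i ∈ S, (v S - v (S.erase i)) ≤ ∑ j ∈ X p, p j) := by
  have hmono' : Monotone v := fun S T h => hmono S T h
  refine ⟨fun p hp => ⟨X p, IsDemanded.sum_le_sum_marginal (hXd p hp)⟩, fun S => ?_⟩
  set M := v univ - v ∅ + 1
  set p := marginalPrices v S M
  have hp : ∀ i, 0 ≤ p i :=
    marginalPrices_nonneg hmono' (by linarith [hmono' (empty_subset (univ : Finset (Fin n)))])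
  have hS : IsDemanded v p S := isDemanded_marginalPrices hmono' hsub (by linarith)
  have hXS : X p = S :=
    (subset_of_isDemanded_marginalPrices hmono' (by linarith) (hXd p hp)).eq_of_not_ssubset
      (hXmax p hp S hS)
  exact ⟨p, hp, by rw [hXS, sum_marginalPrices_of_subset subset_rfl]⟩

/-- Monopolistic seller with monotone submodular `v` and maximal
decision map `X`: the supremum of the revenue `u(p) = ∑_{j ∈ X p} p j` over
nonnegative price vectors equals `max_S ∑_{i∈S} (v S - v (S \ {i}))`, stated as
mutual domination. -/
theorem stmt16 {n : ℕ} (v : Finset (Fin n) → ℝ)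
    (hmono : ∀ S T : Finset (Fin n), S ⊆ T → v S ≤ v T)
    (hsub : ∀ S T : Finset (Fin n), v (S ∪ T) + v (S ∩ T) ≤ v S + v T)
    (hv0 : v ∅ = 0)
    (X : (Fin n → ℝ) → Finset (Fin n))
    (hXd : ∀ q : Fin n → ℝ, (∀ i, 0 ≤ q i) → ∀ T : Finset (Fin n),
      v T - ∑ i ∈ T, q i ≤ v (X q) - ∑ i ∈ X q, q i)
    (hXmax : ∀ q : Fin n → ℝ, (∀ i, 0 ≤ q i) → ∀ T : Finset (Fin n),
      (∀ U : Finset (Fin n), v U - ∑ i ∈ U, q i ≤ v T - ∑ i ∈ T, q i) →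
      ¬ X q ⊂ T) :
    (∀ p : Fin n → ℝ, (∀ i, 0 ≤ p i) → ∃ S : Finset (Fin n),
      ∑ j ∈ X p, p j ≤ ∑ i ∈ S, (v S - v (S.erase i))) ∧
    (∀ S : Finset (Fin n), ∃ p : Fin n → ℝ, (∀ i, 0 ≤ p i) ∧
      ∑ i ∈ S, (v S - v (S.erase i)) ≤ ∑ j ∈ X p, p j) :=
  stmt16_general v hmono hsub X hXd hXmax
end
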